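/- Lawrence's volume formula for a simplex recovers the standard determinant formula: for the simplex with vertices v_0, …, v_d in ℝ^d in general position, and any c such that cᵀx is nonconstant on every edge, the Lawrence sum (1/d!) Σ_v (cᵀv)^d / (|det A(v)| ∏ γ(v)_i) equals |det(v_1 − v_0, …, v_d − v_0)|/d!. -/

import Mathlib

open Polynomial Finset

lemma leadingCoeff_basisDivisor {x y : ℝ} (h : x ≠ y) :
    (Lagrange.basisDivisor x y).leadingCoeff = (x - y)⁻¹ := by
  rw [Lagrange.basisDivisor, leadingCoeff_mul, leadingCoeff_C, leadingCoeff_X_sub_C, mul_one]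

lemma lagrange_sum {n : ℕ} (t : Fin (n+1) → ℝ) (ht : Function.Injective t) :
    ∑ j, (t j)^n * ∏ j' ∈ Finset.univ.erase j, (t j - t j')⁻¹ = 1 := by
  have hinj : Set.InjOn t (Finset.univ : Finset (Fin (n+1))) := ht.injOn
  have hdeg : (X ^ n : ℝ[X]).degree < (#(Finset.univ : Finset (Fin (n+1))) : ℕ) := by
    simp [degree_X_pow]
    exact_mod_cast Nat.lt_succ_self n
  have h := Lagrange.eq_interpolate hinj hdeg
  have h2 := congrArg (Polynomial.coeff · n) h
  simp only [Lagrange.interpolate_apply, finset_sum_coeff, coeff_X_pow, if_pos rfl,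
    coeff_C_mul] at h2
  simp only [if_true, eval_pow, eval_X] at h2
  rw [h2]
  refine Finset.sum_congr rfl fun j _ => ?_
  congr 1
  have hb : (Lagrange.basis Finset.univ t j).natDegree = n := by
    rw [Lagrange.natDegree_basis hinj (mem_univ j)]; simp
  rw [show (Lagrange.basis Finset.univ t j).coeff n = (Lagrange.basis Finset.univ t j).leadingCoeff
    from by rw [leadingCoeff, hb], Lagrange.basis, leadingCoeff_prod]
  refine Finset.prod_congr rfl fun j' hj' => ?_
  exact (leadingCoeff_basisDivisor (ht.ne (mem_erase.mp hj').1.symm)).symm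

lemma prod_neg_fin {n : ℕ} (g : Fin n → ℝ) : ∏ i, -g i = (-1)^n * ∏ i, g i := by
  induction n with
  | zero => simp
  | succ m ih =>
    rw [Fin.prod_univ_succ, Fin.prod_univ_succ (f := g), ih (fun i => g i.succ)]
    ring

lemma prod_succAbove {d : ℕ} (j : Fin (d+1)) (f : Fin (d+1) → ℝ) :
    ∏ i, f (j.succAbove i) = ∏ j' ∈ Finset.univ.erase j, f j' := by
  refine Finset.prod_nbij (fun i => j.succAbove i) (fun i _ => ?_) (fun i _ i' _ h => ?_)
    (fun j' hj' => ?_) (fun _ _ => rfl)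
  · exact Finset.mem_erase.mpr ⟨Fin.succAbove_ne j i, Finset.mem_univ _⟩
  · exact Fin.succAbove_right_injective h
  · obtain ⟨i, hi⟩ := Fin.exists_succAbove_eq (Finset.mem_erase.mp (Finset.mem_coe.mp hj')).1
    exact ⟨i, by simp, hi⟩

/-- Lawrence's formula applied to a simplex with vertices `v₀, …, v_d` recovers the standard
determinant formula: the Lawrence sum `(1/d!) Σ_j (cᵀv_j)^d / (|det A(v_j)| ∏ᵢ γ(v_j)ᵢ)`
equals `|det(v₁ − v₀, …, v_d − v₀)|/d!`. -/
theorem stmt_10 (d : ℕ) (v : Fin (d + 1) → Fin d → ℝ) (hv : AffineIndependent ℝ v)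
    (a : Fin (d + 1) → Fin d → ℝ) (b : Fin (d + 1) → ℝ)
    -- `a i, b i` describes the facet of the simplex opposite the vertex `v i`
    (hfacets : convexHull ℝ (Set.range v) = {x | ∀ i, ∑ k, a i k * x k ≤ b i})
    (htight : ∀ i j, (∑ k, a i k * v j k = b i) ↔ i ≠ j)
    (c : Fin d → ℝ)
    (A : Fin (d + 1) → Matrix (Fin d) (Fin d) ℝ)
    (hA : A = fun j => Matrix.of fun k i => a (j.succAbove i) k)
    (γ : Fin (d + 1) → Fin d → ℝ) (hγ : γ = fun j => (A j)⁻¹.mulVec c)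
    (hγne : ∀ j i, γ j i ≠ 0)
    -- `cᵀx` is nonconstant on every edge of the simplex
    (hc : ∀ i j : Fin (d + 1), i ≠ j → ∑ k, c k * v i k ≠ ∑ k, c k * v j k) :
    (1 / (d.factorial : ℝ)) *
        ∑ j, (∑ k, c k * v j k) ^ d / (|(A j).det| * ∏ i, γ j i) =
      |(Matrix.of fun i k => v i.succ k - v 0 k : Matrix (Fin d) (Fin d) ℝ).det| /
        (d.factorial : ℝ) := by
  rcases Nat.eq_zero_or_pos d with rfl | hd
  · simp [Matrix.det_fin_zero]
  obtain ⟨d, rfl⟩ : ∃ d', d = d' + 1 := ⟨d - 1, (Nat.succ_pred_eq_of_pos hd).symm⟩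
  set t : Fin (d + 2) → ℝ := fun j => ∑ k, c k * v j k with ht
  set D : Fin (d + 2) → ℝ := fun j' => ∑ k, a j' k * v j' k - b j' with hDdef
  set E : Fin (d + 2) → Matrix (Fin (d+1)) (Fin (d+1)) ℝ :=
    fun j => Matrix.of fun i k => v (j.succAbove i) k - v j k with hEdef
  set V : Matrix (Fin (d+1)) (Fin (d+1)) ℝ :=
    Matrix.of fun i k => v i.succ k - v 0 k with hVdef
  -- each D j' is negative
  have hD : ∀ j' : Fin (d + 2), D j' < 0 := by
    intro j'
    have hmem : v j' ∈ convexHull ℝ (Set.range v) := subset_convexHull ℝ _ ⟨j', rfl⟩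
    rw [hfacets] at hmem
    have h1 : ∑ k, a j' k * v j' k ≤ b j' := hmem j'
    have h2 : ∑ k, a j' k * v j' k ≠ b j' := by
      intro h; exact ((htight j' j').mp h) rfl
    simp only [hDdef, sub_neg]
    exact lt_of_le_of_ne h1 h2
  have hDne : ∀ j', D j' ≠ 0 := fun j' => ne_of_lt (hD j')
  -- E j * A j is diagonal
  have hEA : ∀ j, E j * A j = Matrix.diagonal (fun i => D (j.succAbove i)) := by
    intro j
    ext i i'
    simp only [Matrix.mul_apply, hEdef, hA, Matrix.of_apply, Matrix.diagonal_apply]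
    have expand : ∑ k, (v (j.succAbove i) k - v j k) * a (j.succAbove i') k =
        (∑ k, a (j.succAbove i') k * v (j.succAbove i) k) -
          ∑ k, a (j.succAbove i') k * v j k := by
      rw [← Finset.sum_sub_distrib]; exact Finset.sum_congr rfl fun k _ => by ring
    rw [expand]
    have hb2 : ∑ k, a (j.succAbove i') k * v j k = b (j.succAbove i') :=
      (htight _ _).mpr (Fin.succAbove_ne j i')
    rcases eq_or_ne i i' with rfl | hii
    · simp [hDdef, hb2]
    · rw [if_neg hii, hb2, (htight _ _).mpr fun h => hii.symm (Fin.succAbove_right_injective h),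
        sub_self]
  have hdetEA : ∀ j, (E j).det * (A j).det = ∏ i, D (j.succAbove i) := by
    intro j
    rw [← Matrix.det_mul, hEA, Matrix.det_diagonal]
  -- det (A j) ≠ 0
  have hdetA : ∀ j, (A j).det ≠ 0 := by
    intro j h0
    have : (A j)⁻¹ = 0 := Matrix.nonsing_inv_apply_not_isUnit _ (by simp [h0])
    apply hγne j 0
    rw [hγ]; simp [this]
  have hdetE : ∀ j, (E j).det ≠ 0 := by
    intro j h0
    have := hdetEA j
    rw [h0, zero_mul] at this
    exact (Finset.prod_ne_zero_iff.mpr fun i _ => hDne _) this.symm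
  -- formula for γ
  have hγval : ∀ j i, γ j i = (t (j.succAbove i) - t j) / D (j.succAbove i) := by
    intro j i
    have hAγ : (A j).mulVec (γ j) = c := by
      rw [hγ, Matrix.mulVec_mulVec, Matrix.mul_nonsing_inv _ (isUnit_iff_ne_zero.mpr (hdetA j)),
        Matrix.one_mulVec]
    have h1 : ((E j) * (A j)).mulVec (γ j) = (E j).mulVec c := by
      rw [← Matrix.mulVec_mulVec, hAγ]
    rw [hEA j] at h1
    have h2 := congrFun h1 i
    rw [Matrix.mulVec_diagonal] at h2
    have h3 : (E j).mulVec c i = t (j.succAbove i) - t j := by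
      simp only [Matrix.mulVec, dotProduct, hEdef, Matrix.of_apply, ht]
      rw [← Finset.sum_sub_distrib]
      exact Finset.sum_congr rfl fun k _ => by ring
    rw [h3] at h2
    field_simp [hDne]
    linarith [h2]
  -- |det E j| = |det V|
  have habs : ∀ j, |(E j).det| = |V.det| := by
    have key : ∀ j : Fin (d + 2), ((-1 : ℝ))^(j : ℕ) * (E j).det =
        (Matrix.of fun j' : Fin (d+2) => Fin.cons 1 (v j') : Matrix (Fin (d+2)) (Fin (d+2)) ℝ).det := by
      intro j
      set M : Matrix (Fin (d+2)) (Fin (d+2)) ℝ := Matrix.of fun j' => Fin.cons 1 (v j') with hM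
      set N : Matrix (Fin (d+2)) (Fin (d+2)) ℝ :=
        Matrix.of fun j' => if j' = j then (Fin.cons 1 (v j) : Fin (d+2) → ℝ)
          else Fin.cons 0 (fun k => v j' k - v j k) with hN
      have hdetN : N.det = M.det := by
        refine Matrix.det_eq_of_forall_row_eq_smul_add_const
          (fun j' => if j' = j then 0 else -1) j (if_pos rfl) fun j' col => ?_
        rcases eq_or_ne j' j with rfl | hj'
        · simp [hN, hM]
        · simp only [hN, hM, Matrix.of_apply, if_neg hj']
          induction col using Fin.cases with
          | zero => simp
          | succ k => simp [Fin.cons_succ]; ring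
      have hNE : N.det = (-1)^(j:ℕ) * (E j).det := by
        rw [Matrix.det_succ_column_zero]
        rw [Finset.sum_eq_single j]
        · have hsub : N.submatrix j.succAbove Fin.succ = E j := by
            ext i k
            simp [hN, hEdef, Matrix.submatrix_apply, if_neg (Fin.succAbove_ne j i), Fin.cons_succ]
          rw [hsub]
          simp [hN]
        · intro j' _ hj'
          simp [hN, if_neg hj', Fin.cons_zero]
        · simp
      rw [← hNE, hdetN]
    have habs1 : ∀ j : Fin (d + 2), |(E j).det| =
        |(Matrix.of fun j' : Fin (d+2) => Fin.cons 1 (v j') : Matrix (Fin (d+2)) (Fin (d+2)) ℝ).det| := by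
      intro j
      rw [← key j, abs_mul, abs_pow, abs_neg, abs_one, one_pow, one_mul]
    have hE0 : E 0 = V := by
      ext i k
      simp [hEdef, hVdef, Fin.succAbove_zero]
    intro j
    rw [habs1 j, ← habs1 0, hE0]
  have hVne : |V.det| ≠ 0 := by rw [← habs 0]; exact abs_ne_zero.mpr (hdetE 0)
  -- injectivity of t
  have htinj : Function.Injective t := by
    intro i j h
    by_contra hij
    exact hc i j hij h
  -- main term computation
  have hterm : ∀ j, t j ^ (d+1) / (|(A j).det| * ∏ i, γ j i) =
      |V.det| * (t j ^ (d+1) * ∏ j' ∈ Finset.univ.erase j, (t j - t j')⁻¹) := by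
    intro j
    have hprodD : |∏ i, D (j.succAbove i)| = (-1)^(d+1) * ∏ i, D (j.succAbove i) := by
      rw [Finset.abs_prod, ← prod_neg_fin]
      exact Finset.prod_congr rfl fun i _ => abs_of_neg (hD _)
    have hγprod : ∏ i, γ j i =
        (∏ i, (t (j.succAbove i) - t j)) / ∏ i, D (j.succAbove i) := by
      rw [← Finset.prod_div_distrib]
      exact Finset.prod_congr rfl fun i _ => hγval j i
    have hdetAval : |(A j).det| = |∏ i, D (j.succAbove i)| / |(E j).det| := by
      rw [eq_div_iff (abs_ne_zero.mpr (hdetE j)), ← abs_mul, mul_comm, hdetEA j]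
    have hne2 : ∀ i : Fin (d+1), t j - t (j.succAbove i) ≠ 0 :=
      fun i => sub_ne_zero_of_ne (htinj.ne (Fin.succAbove_ne j i).symm)
    rw [hγprod, hdetAval, habs j]
    rw [div_eq_iff]
    · rw [← prod_succAbove j (fun j' => (t j - t j')⁻¹)]
      have h1 : ∏ i, (t (j.succAbove i) - t j) =
          (-1)^(d+1) * ∏ i, (t j - t (j.succAbove i)) := by
        rw [← prod_neg_fin]
        exact Finset.prod_congr rfl fun i _ => by ring
      rw [h1, hprodD]
      have hprodne : ∏ i, (t j - t (j.succAbove i)) ≠ 0 :=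
        Finset.prod_ne_zero_iff.mpr fun i _ => hne2 i
      have hDprodne : ∏ i, D (j.succAbove i) ≠ 0 :=
        Finset.prod_ne_zero_iff.mpr fun i _ => hDne _
      rw [Finset.prod_inv_distrib]
      field_simp
      have hsq : ((-1:ℝ))^(d+1) * (-1)^(d+1) = 1 := by
        rw [← pow_add]; exact Even.neg_one_pow ⟨d+1, by ring⟩
      linear_combination (-(t j ^ (d+1))) * hsq
    · apply mul_ne_zero
      · apply div_ne_zero
        · rw [hprodD]
          apply mul_ne_zero (by positivity)
          exact Finset.prod_ne_zero_iff.mpr fun i _ => hDne _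
        · exact hVne
      · apply div_ne_zero
        · exact Finset.prod_ne_zero_iff.mpr fun i _ =>
            sub_ne_zero_of_ne (htinj.ne (Fin.succAbove_ne j i))
        · exact Finset.prod_ne_zero_iff.mpr fun i _ => hDne _
  calc (1 / ((d+1).factorial : ℝ)) * ∑ j, t j ^ (d+1) / (|(A j).det| * ∏ i, γ j i)
      = (1 / ((d+1).factorial : ℝ)) *
          ∑ j, |V.det| * (t j ^ (d+1) * ∏ j' ∈ Finset.univ.erase j, (t j - t j')⁻¹) := by
        rw [Finset.sum_congr rfl fun j _ => hterm j]
    _ = (1 / ((d+1).factorial : ℝ)) * (|V.det| *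
          ∑ j, t j ^ (d+1) * ∏ j' ∈ Finset.univ.erase j, (t j - t j')⁻¹) := by
        simp_rw [← Finset.mul_sum]
    _ = |V.det| / ((d+1).factorial : ℝ) := by
        rw [lagrange_sum (n := d+1) t htinj, mul_one]; ring
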